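/- For every integer K ≥ 1, the locus {F_K = 1} is a Poisson subvariety of the Flaschka–Newell bracket: in the Laurent-polynomial ring ℂ[s_1, …, s_{2K+2}, λ, λ^{−1}], for every coordinate x ∈ {s_1, …, s_{2K+2}, λ} and every matrix entry (a,b), the bracket {x, (F_K − 1)_{ab}}_{FN} lies in the ideal generated by the four entries of F_K − 1. -/

import Mathlib

noncomputable section

open MvPolynomial

/-- The Laurent-polynomial ring `ℂ[s_1, …, s_{2K+2}, λ, λ⁻¹]` is encoded as the polynomial
ring `ℂ[s_1, …, s_{2K+2}, λ, μ]` (with `μ` playing the role of `λ⁻¹`), in which one always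
works modulo the relation `λμ − 1`.  Variables `0, …, 2K+1` are `s_1, …, s_{2K+2}`,
variable `2K+2` is `λ` and variable `2K+3` is `μ = λ⁻¹`. -/
abbrev RK (K : ℕ) := MvPolynomial (Fin (2*K+4)) ℂ

/-- The variable `s_{j+1}` (0-based `j`). -/
def sVar (K : ℕ) (j : Fin (2*K+2)) : Fin (2*K+4) := ⟨(j:ℕ), by have := j.isLt; omega⟩

/-- The variable `λ`. -/
def lamVar (K : ℕ) : Fin (2*K+4) := ⟨2*K+2, by omega⟩

/-- The variable `μ = λ⁻¹`. -/
def muVar (K : ℕ) : Fin (2*K+4) := ⟨2*K+3, by omega⟩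

/-- The derivation `∂/∂λ` of the Laurent ring, acting on representatives:
`∂λ = ∂/∂λ − μ² ∂/∂μ` (since `∂(λ⁻¹)/∂λ = −λ⁻²`). -/
def Dlam (K : ℕ) (f : RK K) : RK K :=
  pderiv (lamVar K) f - (X (muVar K))^2 * pderiv (muVar K) f

/-- The structure constant `{s_{j+1}, s_{l+1}}_{FN}` for 0-based `j < l`:
`δ_{j+1,l} − δ_{j,0}δ_{l,2K+1}·λ^{−2} + (−1)^{j+l+1} s_j s_l`, with `λ^{−2}` written `μ²`. -/
def cSSP (K : ℕ) (j l : Fin (2*K+2)) : RK K :=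
  (if (j:ℕ)+1 = (l:ℕ) then 1 else 0)
  - (if (j:ℕ) = 0 ∧ (l:ℕ) = 2*K+1 then (X (muVar K))^2 else 0)
  + (-1:RK K)^((j:ℕ)+(l:ℕ)+1) * X (sVar K j) * X (sVar K l)

/-- The structure constant `{s_{j+1}, λ}_{FN} = (−1)^{j+1} s_{j+1} λ` (0-based `j`). -/
def cSLP (K : ℕ) (j : Fin (2*K+2)) : RK K :=
  (-1:RK K)^((j:ℕ)+1) * X (sVar K j) * X (lamVar K)

/-- The Flaschka–Newell bracket on the (Laurent-)polynomial ring: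
`{f,g} = Σ_{j<l} {s_j,s_l}·(∂_j f ∂_l g − ∂_l f ∂_j g) + Σ_j {s_j,λ}·(∂_j f ∂_λ g − ∂_λ f ∂_j g)`. -/
def fnBrP (K : ℕ) (f g : RK K) : RK K :=
  (∑ j : Fin (2*K+2), ∑ l : Fin (2*K+2),
    if (j:ℕ) < (l:ℕ) then
      cSSP K j l * (pderiv (sVar K j) f * pderiv (sVar K l) g
                    - pderiv (sVar K l) f * pderiv (sVar K j) g)
    else 0)
  + ∑ j : Fin (2*K+2),
      cSLP K j * (pderiv (sVar K j) f * Dlam K g - Dlam K f * pderiv (sVar K j) g)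

/-- Upper-triangular unipotent 2×2 matrix. -/
def UmatP (K : ℕ) (a : RK K) : Matrix (Fin 2) (Fin 2) (RK K) := !![1, a; 0, 1]

/-- Lower-triangular unipotent 2×2 matrix. -/
def LmatP (K : ℕ) (a : RK K) : Matrix (Fin 2) (Fin 2) (RK K) := !![1, 0; a, 1]

/-- The matrix `F_K = [[1,s_1],[0,1]]·[[1,0],[s_2,1]] ⋯ [[1,s_{2K+1}],[0,1]]·
[[1,0],[s_{2K+2},1]]·diag(λ, λ⁻¹)` over the Laurent-polynomial ring (`λ⁻¹` written `μ`). -/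
def FmatP (K : ℕ) : Matrix (Fin 2) (Fin 2) (RK K) :=
  ((List.ofFn fun i : Fin (K+1) =>
      UmatP K (X (sVar K ⟨2*(i:ℕ), by have := i.isLt; omega⟩)) *
      LmatP K (X (sVar K ⟨2*(i:ℕ)+1, by have := i.isLt; omega⟩))).prod)
    * !![X (lamVar K), 0; 0, X (muVar K)]

/-- The coordinate `x` among `s_1, …, s_{2K+2}, λ`. -/
def coordVar (K : ℕ) (i : Fin (2*K+3)) : Fin (2*K+4) :=
  if h : (i:ℕ) < 2*K+2 then sVar K ⟨(i:ℕ), h⟩ else lamVar K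

/-!
Indices are `0`-based as in `sVar`. Write `F = P · diag(λ, λ⁻¹)` with `P = E₀ E₁ ⋯ E_{2K+1}`,
`E_l = 1 + s_l e_l`, where `e_l` is the upper nilpotent generator for even `l` and the lower one
for odd `l`. With the partial products `P_l = E₀ ⋯ E_{l-1}` and `η_l = P_l e_l P_l⁻¹` one has
`∂F/∂s_l = η_l F` and `λ ∂F/∂λ = F · diag(1, -1)`. Hence, modulo the entries of `F - 1`, the
bracket `{s_m, F}` is `Σ_{l>m} {s_m, s_l} η_l - Σ_{j<m} {s_j, s_m} η_j + (-1)^{m+1} s_m diag(1, -1)`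
and `{λ, F}` is `λ Σ_l (-1)^l s_l η_l`.

The quadratic part of the structure constants telescopes: `γ_l = P_l E₂₂ P_l⁻¹`, with
`E₂₂ = diag(0, 1)`, satisfies `γ_{l+1} = γ_l + (-1)^l s_l η_l`. Conjugating `e_{l+1}` by `E_l`
gives `η_{l+1} = η_{l-1} + (-1)^l s_l (1 - 2γ_l) - s_l² η_l` (with `η_{-1} = e_1`), which absorbs
the nearest-neighbour part. What remains of `{s_m, F}` is `(-1)^m s_m (E₂₂ - γ_{2K+2})`, plus
`e_1 - λ⁻² η_{2K+1}` for `m = 0` and `λ⁻² η_0 - η_{2K+2}` for `m = 2K+1`, which come from the `λ⁻²`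
in `{s_0, s_{2K+1}}`. On the locus `P = diag(λ⁻¹, λ)`, so conjugation by `P` fixes `E₂₂` and
`η_{2K+2} = λ⁻² e₀`, `η_{2K+1} = λ² e_1`: every remaining term vanishes. All of this is checked in
the quotient ring, where `F = 1` and `λμ = 1` hold exactly.
-/

namespace FlaschkaNewell

section StokesProduct

variable {R : Type*} [CommRing R]

def nilGen (l : ℕ) : Matrix (Fin 2) (Fin 2) R :=
  if Even l then !![0, 1; 0, 0] else !![0, 0; 1, 0]

def stokes (s : ℕ → R) (l : ℕ) : Matrix (Fin 2) (Fin 2) R := 1 + s l • nilGen l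

def stokesProd (s : ℕ → R) : ℕ → Matrix (Fin 2) (Fin 2) R
  | 0 => 1
  | l + 1 => stokesProd s l * stokes s l

def stokesDlog (s : ℕ → R) (l : ℕ) : Matrix (Fin 2) (Fin 2) R :=
  stokesProd s l * nilGen l * (stokesProd s l)⁻¹

def stokesDiag (s : ℕ → R) (l : ℕ) : Matrix (Fin 2) (Fin 2) R :=
  stokesProd s l * !![0, 0; 0, 1] * (stokesProd s l)⁻¹

lemma nilGen_of_even {l : ℕ} (h : Even l) :
    nilGen l = (!![0, 1; 0, 0] : Matrix (Fin 2) (Fin 2) R) :=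
  if_pos h

lemma nilGen_of_odd {l : ℕ} (h : Odd l) :
    nilGen l = (!![0, 0; 1, 0] : Matrix (Fin 2) (Fin 2) R) :=
  if_neg (Nat.not_even_iff_odd.2 h)

lemma nilGen_mul_self (l : ℕ) : nilGen l * nilGen l = (0 : Matrix (Fin 2) (Fin 2) R) := by
  rcases Nat.even_or_odd l with h | h <;>
  · ext i j
    fin_cases i <;> fin_cases j <;> simp [nilGen_of_even, nilGen_of_odd, h, Matrix.mul_apply]

lemma nilGen_add_two (l : ℕ) : nilGen (l + 2) = (nilGen l : Matrix (Fin 2) (Fin 2) R) := by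
  simp [nilGen, Nat.even_add]

variable (s : ℕ → R)

lemma stokes_inv (l : ℕ) : (stokes s l)⁻¹ = 1 - s l • nilGen l :=
  Matrix.inv_eq_right_inv <| by simp [stokes, add_mul, mul_sub, nilGen_mul_self]

lemma det_stokes (l : ℕ) : (stokes s l).det = 1 := by
  rcases Nat.even_or_odd l with h | h <;>
    simp [stokes, nilGen_of_even, nilGen_of_odd, h, Matrix.det_fin_two]

lemma nilGen_mul_stokes (l : ℕ) : nilGen l * stokes s l = nilGen l := by
  simp [stokes, mul_add, nilGen_mul_self]

lemma conj_stokes_nilGen (l : ℕ) : stokes s l * nilGen l * (stokes s l)⁻¹ = nilGen l := by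
  rw [mul_assoc, stokes_inv]
  simp [stokes, mul_sub, add_mul, nilGen_mul_self]

lemma conj_stokes_diag (l : ℕ) :
    stokes s l * !![0, 0; 0, 1] * (stokes s l)⁻¹
      = !![0, 0; 0, 1] + ((-1) ^ l * s l) • nilGen l := by
  rw [stokes_inv]
  rcases Nat.even_or_odd l with h | h <;>
  · ext i j
    fin_cases i <;> fin_cases j <;>
      simp [stokes, nilGen_of_even, nilGen_of_odd, h, h.neg_one_pow, Matrix.mul_apply]

lemma conj_stokes_nilGen_succ (l : ℕ) :
    stokes s l * nilGen (l + 1) * (stokes s l)⁻¹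
      = nilGen (l + 1) + ((-1) ^ l * s l) • (1 - 2 • !![0, 0; 0, 1])
        - s l ^ 2 • nilGen l := by
  rw [stokes_inv]
  rcases Nat.even_or_odd l with h | h <;>
  · ext i j
    fin_cases i <;> fin_cases j <;>
      simp [stokes, nilGen_of_even, nilGen_of_odd, h, h.add_one, h.neg_one_pow,
        Matrix.mul_apply, Matrix.one_apply] <;> ring

lemma stokesProd_two_mul (j : ℕ) :
    stokesProd s (2 * j)
      = (List.ofFn fun i : Fin j => stokes s (2 * i) * stokes s (2 * i + 1)).prod := by
  induction j with
  | zero => rfl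
  | succ j ih =>
    rw [List.ofFn_succ', List.prod_concat]
    simp only [Fin.val_castSucc, Fin.val_last]
    rw [← ih, ← mul_assoc]
    rfl

lemma det_stokesProd (n : ℕ) : (stokesProd s n).det = 1 := by
  induction n with
  | zero => simp [stokesProd]
  | succ n ih => simp [stokesProd, ih, det_stokes]

lemma stokesProd_mul_inv (n : ℕ) : stokesProd s n * (stokesProd s n)⁻¹ = 1 :=
  Matrix.mul_nonsing_inv _ (by simp [det_stokesProd])

lemma inv_mul_stokesProd (n : ℕ) : (stokesProd s n)⁻¹ * stokesProd s n = 1 :=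
  Matrix.nonsing_inv_mul _ (by simp [det_stokesProd])

lemma conj_stokesProd_succ (n : ℕ) (M : Matrix (Fin 2) (Fin 2) R) :
    stokesProd s (n + 1) * M * (stokesProd s (n + 1))⁻¹
      = stokesProd s n * (stokes s n * M * (stokes s n)⁻¹) * (stokesProd s n)⁻¹ := by
  simp only [stokesProd, Matrix.mul_inv_rev, mul_assoc]

lemma stokesDiag_zero : stokesDiag s 0 = !![0, 0; 0, 1] := by
  simp [stokesDiag, stokesProd]

lemma stokesDlog_zero : stokesDlog s 0 = !![0, 1; 0, 0] := by
  simp [stokesDlog, stokesProd, nilGen_of_even Even.zero]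

lemma stokesDiag_succ (l : ℕ) :
    stokesDiag s (l + 1) = stokesDiag s l + ((-1) ^ l * s l) • stokesDlog s l := by
  rw [stokesDiag, conj_stokesProd_succ, conj_stokes_diag, mul_add, add_mul, mul_smul_comm,
    smul_mul_assoc, stokesDiag, stokesDlog]

lemma conj_stokesProd_sigma (l : ℕ) :
    stokesProd s l * (1 - 2 • !![0, 0; 0, 1]) * (stokesProd s l)⁻¹
      = 1 - 2 • stokesDiag s l := by
  rw [mul_sub, sub_mul, mul_one, stokesProd_mul_inv, mul_smul_comm, smul_mul_assoc, stokesDiag]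

lemma stokesDlog_one :
    stokesDlog s 1
      = !![0, 0; 1, 0] + s 0 • (1 - 2 • !![0, 0; 0, 1]) - s 0 ^ 2 • !![0, 1; 0, 0] := by
  rw [stokesDlog, conj_stokesProd_succ, conj_stokes_nilGen_succ]
  simp [stokesProd, nilGen_of_even Even.zero, nilGen_of_odd odd_one]

lemma stokesDlog_add_two (k : ℕ) :
    stokesDlog s (k + 2) = stokesDlog s k
      + ((-1) ^ (k + 1) * s (k + 1)) • (1 - 2 • stokesDiag s (k + 1))
      - s (k + 1) ^ 2 • stokesDlog s (k + 1) := by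
  have hprev :
      stokesProd s (k + 1) * nilGen (k + 1 + 1) * (stokesProd s (k + 1))⁻¹ = stokesDlog s k := by
    rw [nilGen_add_two, conj_stokesProd_succ, conj_stokes_nilGen, stokesDlog]
  rw [stokesDlog, conj_stokesProd_succ, conj_stokes_nilGen_succ, mul_sub, mul_add, sub_mul,
    add_mul, mul_smul_comm, mul_smul_comm, smul_mul_assoc, smul_mul_assoc, hprev,
    conj_stokesProd_sigma]
  rfl

lemma sum_Ico_stokesDlog {a b : ℕ} (hab : a ≤ b) :
    ∑ l ∈ Finset.Ico a b, ((-1) ^ l * s l) • stokesDlog s l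
      = stokesDiag s b - stokesDiag s a := by
  rw [← Finset.sum_Ico_sub _ hab]
  exact Finset.sum_congr rfl fun l _ => by rw [stokesDiag_succ, add_sub_cancel_left]

def fnCoeff (K : ℕ) (mu : R) (j l : ℕ) : R :=
  (if j + 1 = l then 1 else 0) - (if j = 0 ∧ l = 2 * K + 1 then mu ^ 2 else 0)
    + (-1) ^ (j + l + 1) * s j * s l

def fnBracketMatrix (K : ℕ) (mu : R) (m : ℕ) : Matrix (Fin 2) (Fin 2) R :=
  ∑ l ∈ Finset.Ioo m (2 * K + 2), fnCoeff s K mu m l • stokesDlog s l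
    - ∑ j ∈ Finset.range m, fnCoeff s K mu j m • stokesDlog s j
    + ((-1) ^ (m + 1) * s m) • !![1, 0; 0, -1]

variable {K : ℕ} (mu : R)

lemma sum_Ioo_fnCoeff_smul {m : ℕ} (hm : m < 2 * K + 2) :
    ∑ l ∈ Finset.Ioo m (2 * K + 2), fnCoeff s K mu m l • stokesDlog s l
      = (if m + 1 < 2 * K + 2 then stokesDlog s (m + 1) else 0)
        - (if m = 0 then mu ^ 2 • stokesDlog s (2 * K + 1) else 0)
        - ((-1) ^ m * s m) • (stokesDiag s (2 * K + 2) - stokesDiag s (m + 1)) := by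
  have hquad :
      ∑ l ∈ Finset.Ioo m (2 * K + 2), ((-1) ^ (m + l + 1) * s m * s l) • stokesDlog s l
        = -((-1) ^ m * s m)
          • ∑ l ∈ Finset.Ico (m + 1) (2 * K + 2), ((-1) ^ l * s l) • stokesDlog s l := by
    rw [Finset.smul_sum, Finset.Ico_add_one_left_eq_Ioo]
    refine Finset.sum_congr rfl fun l _ => ?_
    rw [smul_smul]
    ring_nf
  have hbdry : ∑ l ∈ Finset.Ioo m (2 * K + 2),
      (if m = 0 ∧ l = 2 * K + 1 then mu ^ 2 else 0) • stokesDlog s l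
        = if m = 0 then mu ^ 2 • stokesDlog s (2 * K + 1) else 0 := by
    split_ifs with h0
    · simp [h0, ite_smul, Finset.sum_ite_eq']
    · simp [h0]
  simp only [fnCoeff, add_smul, sub_smul, Finset.sum_add_distrib, Finset.sum_sub_distrib]
  rw [hquad, hbdry, sum_Ico_stokesDlog s hm]
  simp only [ite_smul, one_smul, zero_smul, Finset.sum_ite_eq, Finset.mem_Ioo, lt_add_one,
    true_and, neg_smul]
  abel

lemma sum_range_fnCoeff_smul (k : ℕ) :
    ∑ j ∈ Finset.range (k + 1), fnCoeff s K mu j (k + 1) • stokesDlog s j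
      = stokesDlog s k - (if k = 2 * K then mu ^ 2 • stokesDlog s 0 else 0)
        - ((-1) ^ (k + 1) * s (k + 1)) • (stokesDiag s (k + 1) - !![0, 0; 0, 1]) := by
  have hquad :
      ∑ j ∈ Finset.range (k + 1),
          ((-1) ^ (j + (k + 1) + 1) * s j * s (k + 1)) • stokesDlog s j
        = -((-1) ^ (k + 1) * s (k + 1))
          • ∑ j ∈ Finset.Ico 0 (k + 1), ((-1) ^ j * s j) • stokesDlog s j := by
    rw [Finset.smul_sum, Finset.range_eq_Ico]
    refine Finset.sum_congr rfl fun j _ => ?_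
    rw [smul_smul]
    ring_nf
  have hbdry : ∑ j ∈ Finset.range (k + 1),
      (if j = 0 ∧ k + 1 = 2 * K + 1 then mu ^ 2 else 0) • stokesDlog s j
        = if k = 2 * K then mu ^ 2 • stokesDlog s 0 else 0 := by
    split_ifs with htop
    · simp [htop, ite_smul, Finset.sum_ite_eq']
    · simp [htop]
  simp only [fnCoeff, add_smul, sub_smul, Finset.sum_add_distrib, Finset.sum_sub_distrib]
  rw [hquad, hbdry, sum_Ico_stokesDlog s (Nat.zero_le _), stokesDiag_zero]
  simp only [ite_smul, one_smul, zero_smul, add_left_inj, Finset.sum_ite_eq', Finset.mem_range,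
    lt_add_one, if_true, neg_smul]
  abel

lemma fnBracketMatrix_eq {m : ℕ} (hm : m < 2 * K + 2) :
    fnBracketMatrix s K mu m
      = (if m = 0 then !![0, 0; 1, 0] - mu ^ 2 • stokesDlog s (2 * K + 1) else 0)
        + (if m = 2 * K + 1 then mu ^ 2 • stokesDlog s 0 - stokesDlog s (2 * K + 2) else 0)
        + ((-1) ^ m * s m) • (!![0, 0; 0, 1] - stokesDiag s (2 * K + 2)) := by
  have hsigma : (!![1, 0; 0, -1] : Matrix (Fin 2) (Fin 2) R) = 1 - 2 • !![0, 0; 0, 1] := by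
    ext i j
    fin_cases i <;> fin_cases j <;> norm_num
  rw [fnBracketMatrix, sum_Ioo_fnCoeff_smul s mu hm, hsigma]
  rcases m with _ | k
  · simp only [Finset.range_zero, Finset.sum_empty, if_pos (show 0 + 1 < 2 * K + 2 by omega),
      if_true, if_neg (show 0 ≠ 2 * K + 1 by omega)]
    rw [stokesDlog_one, stokesDiag_succ s 0, stokesDiag_zero, stokesDlog_zero]
    module
  · have hdiag : stokesDiag s (k + 2)
        = stokesDiag s (k + 1) + ((-1) ^ (k + 1) * s (k + 1)) • stokesDlog s (k + 1) :=
      stokesDiag_succ s (k + 1)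
    have hsq : ((-1 : R) ^ (k + 1)) ^ 2 = 1 := by
      rw [← pow_mul, mul_comm, pow_mul, neg_one_sq, one_pow]
    rw [sum_range_fnCoeff_smul, show k + 1 + 1 = k + 2 from rfl]
    by_cases htop : k = 2 * K
    · simp only [← htop, lt_irrefl, if_false, if_true, Nat.add_one_ne_zero, hdiag,
        stokesDlog_add_two]
      linear_combination (norm := module) hsq • (s (k + 1) ^ 2 • stokesDlog s (k + 1))
    · simp only [if_pos (show k + 2 < 2 * K + 2 by omega), htop, if_false, Nat.add_one_ne_zero,
        show k + 1 ≠ 2 * K + 1 by omega, hdiag, stokesDlog_add_two]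
      linear_combination (norm := module) hsq • (s (k + 1) ^ 2 • stokesDlog s (k + 1))

section Locus

variable {s} {lam mu : R} (hP : stokesProd s (2 * K + 2) = !![mu, 0; 0, lam])
  (h : lam * mu = 1)
include hP h

lemma inv_stokesProd_top : (stokesProd s (2 * K + 2))⁻¹ = !![lam, 0; 0, mu] :=
  Matrix.inv_eq_right_inv <| by
    rw [hP, Matrix.mul_fin_two, mul_comm mu, h, Matrix.one_fin_two]
    simp

lemma stokesDiag_top : stokesDiag s (2 * K + 2) = !![0, 0; 0, 1] := by
  rw [stokesDiag, inv_stokesProd_top hP h, hP]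
  ext i j
  fin_cases i <;> fin_cases j <;> simp [h]

lemma stokesDlog_top : stokesDlog s (2 * K + 2) = mu ^ 2 • stokesDlog s 0 := by
  rw [stokesDlog, inv_stokesProd_top hP h, hP, nilGen_of_even ⟨K + 1, by ring⟩, stokesDlog_zero]
  ext i j
  fin_cases i <;> fin_cases j <;> simp [Matrix.mul_apply, sq]

lemma sq_smul_stokesDlog_top_pred : mu ^ 2 • stokesDlog s (2 * K + 1) = !![0, 0; 1, 0] := by
  have hconj : stokesDlog s (2 * K + 1)
      = stokesProd s (2 * K + 2) * nilGen (2 * K + 1) * (stokesProd s (2 * K + 2))⁻¹ := by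
    rw [conj_stokesProd_succ, conj_stokes_nilGen, stokesDlog]
  rw [hconj, inv_stokesProd_top hP h, hP, nilGen_of_odd ⟨K, rfl⟩]
  ext i j
  fin_cases i <;> fin_cases j <;> simp
  linear_combination (lam * mu + 1) * h

theorem fnBracketMatrix_eq_zero {m : ℕ} (hm : m < 2 * K + 2) : fnBracketMatrix s K mu m = 0 := by
  rw [fnBracketMatrix_eq s mu hm, sq_smul_stokesDlog_top_pred hP h, stokesDlog_top hP h,
    stokesDiag_top hP h]
  simp

theorem sum_stokesDlog_eq_zero :
    ∑ j ∈ Finset.range (2 * K + 2), ((-1) ^ j * s j) • stokesDlog s j = 0 := by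
  rw [Finset.range_eq_Ico, sum_Ico_stokesDlog s (Nat.zero_le _), stokesDiag_top hP h,
    stokesDiag_zero, sub_self]

end Locus

section RingHom

variable {S : Type*} [CommRing S] (f : R →+* S)

lemma map_nilGen (l : ℕ) : (nilGen l).map f = nilGen l := by
  rcases Nat.even_or_odd l with h | h <;>
  · ext i j
    fin_cases i <;> fin_cases j <;> simp [nilGen_of_even, nilGen_of_odd, h]

lemma map_stokesProd (n : ℕ) : (stokesProd s n).map f = stokesProd (f ∘ s) n := by
  induction n with
  | zero => simp [stokesProd]
  | succ n ih =>
    have hstokes : (stokes s n).map f = stokes (f ∘ s) n := by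
      rw [stokes, stokes, ← f.mapMatrix_apply, map_add, map_one, f.mapMatrix_apply,
        Matrix.map_smul' _ _ _ (map_mul f), map_nilGen]
      rfl
    rw [stokesProd, Matrix.map_mul, ih, hstokes, stokesProd]

lemma map_inv_stokesProd (n : ℕ) :
    (stokesProd s n)⁻¹.map f = (stokesProd (f ∘ s) n)⁻¹ := by
  refine (Matrix.inv_eq_right_inv ?_).symm
  rw [← map_stokesProd, ← Matrix.map_mul, stokesProd_mul_inv]
  simp

lemma map_stokesDlog (l : ℕ) : (stokesDlog s l).map f = stokesDlog (f ∘ s) l := by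
  rw [stokesDlog, Matrix.map_mul, Matrix.map_mul, map_stokesProd, map_inv_stokesProd,
    map_nilGen, stokesDlog]

lemma map_fnCoeff (j l : ℕ) : f (fnCoeff s K mu j l) = fnCoeff (f ∘ s) K (f mu) j l := by
  simp [fnCoeff, apply_ite f]

end RingHom

end StokesProduct

section Derivation

variable {R A : Type*} [CommRing R] [CommRing A] [Algebra R A] (D : Derivation R A A)

lemma _root_.Matrix.map_derivation_mul {m n p : Type*} [Fintype n] (M : Matrix m n A)
    (N : Matrix n p A) : (M * N).map D = M.map D * N + M * N.map D := by
  ext i j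
  simp [Matrix.mul_apply, Finset.sum_add_distrib, mul_comm]
  exact add_comm _ _

variable (s : ℕ → A)

lemma map_stokes_derivation (l : ℕ) : (stokes s l).map D = D (s l) • nilGen l := by
  rcases Nat.even_or_odd l with h | h <;>
  · ext i j
    fin_cases i <;> fin_cases j <;> simp [stokes, nilGen_of_even, nilGen_of_odd, h]

lemma stokesDlog_mul_stokesProd_succ (l : ℕ) :
    stokesDlog s l * stokesProd s (l + 1) = stokesProd s l * nilGen l := by
  rw [stokesDlog, stokesProd, mul_assoc, mul_assoc, ← mul_assoc (stokesProd s l)⁻¹,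
    inv_mul_stokesProd, one_mul, nilGen_mul_stokes]

lemma map_stokesProd_derivation {l : ℕ} (hD : ∀ i ≠ l, D (s i) = 0) (n : ℕ) :
    (stokesProd s n).map D
      = if l < n then D (s l) • (stokesDlog s l * stokesProd s n) else 0 := by
  induction n with
  | zero =>
    ext i j
    simp [stokesProd, Matrix.one_apply, apply_ite D]
  | succ n ih =>
    conv_lhs => rw [stokesProd, Matrix.map_derivation_mul, ih, map_stokes_derivation]
    rcases lt_trichotomy l n with hln | rfl | hln
    · simp [hln, hln.trans (Nat.lt_succ_self n), hD n hln.ne', stokesProd, mul_assoc]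
    · simp [stokesDlog_mul_stokesProd_succ]
    · simp [hln.not_gt, hD n hln.ne, show ¬ l < n + 1 by omega]

end Derivation

lemma sum_fin_ite_lt_eq_sum_Ioo {M : Type*} [AddCommMonoid M] (n m : ℕ) (F : ℕ → M) :
    ∑ l : Fin n, (if m < (l : ℕ) then F l else 0) = ∑ l ∈ Finset.Ioo m n, F l := by
  rw [Fin.sum_univ_eq_sum_range (fun l => if m < l then F l else 0), ← Finset.sum_filter]
  congr 1
  ext l
  simp [and_comm]

lemma sum_fin_ite_gt_eq_sum_range {M : Type*} [AddCommMonoid M] {n m : ℕ} (hm : m ≤ n)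
    (F : ℕ → M) :
    ∑ j : Fin n, (if (j : ℕ) < m then F j else 0) = ∑ j ∈ Finset.range m, F j := by
  rw [Fin.sum_univ_eq_sum_range (fun j => if j < m then F j else 0), ← Finset.sum_filter]
  congr 1
  ext j
  simp only [Finset.mem_filter, Finset.mem_range]
  omega

section LaurentRing

variable {K : ℕ}

lemma sVar_injective : Function.Injective (sVar K) := fun _ _ h =>
  Fin.ext (by simpa [sVar] using congrArg Fin.val h)

lemma sVar_ne_lamVar (j : Fin (2 * K + 2)) : sVar K j ≠ lamVar K :=
  Fin.ne_of_val_ne (by simp [sVar, lamVar]; omega)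

lemma sVar_ne_muVar (j : Fin (2 * K + 2)) : sVar K j ≠ muVar K :=
  Fin.ne_of_val_ne (by simp [sVar, muVar]; omega)

lemma lamVar_ne_muVar : lamVar K ≠ muVar K := Fin.ne_of_val_ne (by simp [lamVar, muVar])

lemma pderiv_sVar_X_sVar (j m : Fin (2 * K + 2)) :
    pderiv (sVar K j) (X (sVar K m) : RK K) = if m = j then 1 else 0 := by
  simp [pderiv_X, Pi.single_apply, sVar_injective.eq_iff]

lemma Dlam_X_sVar (m : Fin (2 * K + 2)) : Dlam K (X (sVar K m)) = 0 := by
  rw [Dlam, pderiv_X_of_ne (sVar_ne_lamVar m), pderiv_X_of_ne (sVar_ne_muVar m)]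
  ring

lemma Dlam_X_lamVar : Dlam K (X (lamVar K)) = 1 := by
  rw [Dlam, pderiv_X_self, pderiv_X_of_ne lamVar_ne_muVar]
  ring

lemma fnBrP_X_sVar (m : Fin (2 * K + 2)) (g : RK K) :
    fnBrP K (X (sVar K m)) g =
      (∑ l : Fin (2 * K + 2), if (m : ℕ) < l then cSSP K m l * pderiv (sVar K l) g else 0)
      - (∑ j : Fin (2 * K + 2), if (j : ℕ) < m then cSSP K j m * pderiv (sVar K j) g else 0)
      + cSLP K m * Dlam K g := by
  have hterm : ∀ j l : Fin (2 * K + 2),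
      (if (j : ℕ) < l then cSSP K j l * ((if m = j then pderiv (sVar K l) g else 0)
        - (if m = l then pderiv (sVar K j) g else 0)) else 0)
      = (if m = j then (if (m : ℕ) < l then cSSP K m l * pderiv (sVar K l) g else 0) else 0)
        - (if m = l then (if (j : ℕ) < m then cSSP K j m * pderiv (sVar K j) g else 0)
            else 0) := by
    intro j l
    by_cases hj : m = j <;> by_cases hl : m = l <;> subst_vars <;> split_ifs <;> simp_all
  simp only [fnBrP, pderiv_sVar_X_sVar, Dlam_X_sVar, ite_mul, one_mul, zero_mul, mul_zero,
    sub_zero, hterm, Finset.sum_sub_distrib, Finset.sum_ite_irrel, Finset.sum_ite_eq,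
    Finset.sum_const_zero, Finset.mem_univ, if_true, mul_ite]

lemma fnBrP_X_lamVar (g : RK K) :
    fnBrP K (X (lamVar K)) g = -∑ j : Fin (2 * K + 2), cSLP K j * pderiv (sVar K j) g := by
  simp [fnBrP, pderiv_X_of_ne (sVar_ne_lamVar _).symm, Dlam_X_lamVar]

/-- `s_{i+1}` for `i < 2K+2`; the padding value `0` is never reached by `stokesProd _ (2K+2)`. -/
def stokesVar (K i : ℕ) : RK K := if h : i < 2 * K + 2 then X (sVar K ⟨i, h⟩) else 0

lemma stokesVar_coe (j : Fin (2 * K + 2)) : stokesVar K j = X (sVar K j) := dif_pos j.isLt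

lemma pderiv_sVar_stokesVar (l : Fin (2 * K + 2)) (i : ℕ) :
    pderiv (sVar K l) (stokesVar K i) = if i = l then 1 else 0 := by
  unfold stokesVar
  split_ifs with hi hil hil
  · rw [pderiv_sVar_X_sVar, if_pos (Fin.ext hil)]
  · rw [pderiv_sVar_X_sVar, if_neg (fun h => hil (congrArg Fin.val h))]
  · exact absurd (hil ▸ l.isLt) hi
  · exact map_zero _

def lamDeriv (K : ℕ) : Derivation ℂ (RK K) (RK K) :=
  pderiv (lamVar K) - (X (muVar K) ^ 2 : RK K) • pderiv (muVar K)

lemma lamDeriv_apply (f : RK K) : lamDeriv K f = Dlam K f := rfl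

lemma lamDeriv_stokesVar (i : ℕ) : lamDeriv K (stokesVar K i) = 0 := by
  unfold stokesVar
  split_ifs
  · rw [lamDeriv_apply, Dlam_X_sVar]
  · exact map_zero _

lemma FmatP_eq :
    FmatP K = stokesProd (stokesVar K) (2 * K + 2) * !![X (lamVar K), 0; 0, X (muVar K)] := by
  have hprod := stokesProd_two_mul (stokesVar K) (K + 1)
  rw [show 2 * (K + 1) = 2 * K + 2 by ring] at hprod
  rw [FmatP, hprod]
  refine congrArg (· * _) (congrArg List.prod (congrArg List.ofFn (funext fun i => ?_)))
  have h0 : stokesVar K (2 * i) = X (sVar K ⟨2 * i, by omega⟩) := dif_pos (by omega)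
  have h1 : stokesVar K (2 * i + 1) = X (sVar K ⟨2 * i + 1, by omega⟩) := dif_pos (by omega)
  congr 1
  · rw [stokes, h0, nilGen_of_even (even_two_mul _)]
    ext a b : 2
    fin_cases a <;> fin_cases b <;> simp [UmatP]
  · rw [stokes, h1, nilGen_of_odd (odd_two_mul_add_one _)]
    ext a b : 2
    fin_cases a <;> fin_cases b <;> simp [LmatP]

lemma map_pderiv_FmatP (l : Fin (2 * K + 2)) :
    (FmatP K).map (pderiv (sVar K l)) = stokesDlog (stokesVar K) l * FmatP K := by
  have hdiag : (!![X (lamVar K), 0; 0, X (muVar K)] : Matrix (Fin 2) (Fin 2) (RK K)).map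
      (pderiv (sVar K l)) = 0 := by
    ext a b : 2
    fin_cases a <;> fin_cases b <;>
      simp [pderiv_X_of_ne (sVar_ne_lamVar l).symm, pderiv_X_of_ne (sVar_ne_muVar l).symm]
  rw [FmatP_eq, Matrix.map_derivation_mul, hdiag, mul_zero, add_zero,
    map_stokesProd_derivation (l := l) _ _ (fun i hi => by rw [pderiv_sVar_stokesVar, if_neg hi]),
    if_pos l.isLt, pderiv_sVar_stokesVar, if_pos rfl, one_smul, mul_assoc]

lemma map_lamDeriv_FmatP :
    (FmatP K).map (lamDeriv K)
      = stokesProd (stokesVar K) (2 * K + 2) * !![1, 0; 0, -X (muVar K) ^ 2] := by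
  have hdiag : (!![X (lamVar K), 0; 0, X (muVar K)] : Matrix (Fin 2) (Fin 2) (RK K)).map
      (lamDeriv K) = !![1, 0; 0, -X (muVar K) ^ 2] := by
    ext a b : 2
    fin_cases a <;> fin_cases b <;>
      simp [lamDeriv_apply, Dlam, pderiv_X_of_ne lamVar_ne_muVar,
        pderiv_X_of_ne lamVar_ne_muVar.symm]
  rw [FmatP_eq, Matrix.map_derivation_mul, hdiag,
    map_stokesProd_derivation (l := 2 * K + 2) _ _ (fun i _ => lamDeriv_stokesVar i),
    if_neg (lt_irrefl _), zero_mul, zero_add]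

section Specialization

variable {S : Type*} [CommRing S] (f : RK K →+* S) (hF : (FmatP K).map f = 1)

include hF

lemma map_pderiv_FmatP_sub_one (l : Fin (2 * K + 2)) (a b : Fin 2) :
    f (pderiv (sVar K l) ((FmatP K - 1) a b)) = stokesDlog (f ∘ stokesVar K) l a b := by
  calc f (pderiv (sVar K l) ((FmatP K - 1) a b))
      = ((FmatP K).map (pderiv (sVar K l))).map f a b := by
        simp [Matrix.one_apply, apply_ite (pderiv (sVar K l))]
    _ = stokesDlog (f ∘ stokesVar K) l a b := by
        rw [map_pderiv_FmatP, Matrix.map_mul, map_stokesDlog, hF, mul_one]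

variable (hlm : f (X (lamVar K)) * f (X (muVar K)) = 1)
include hlm

lemma stokesProd_map_eq_diag :
    stokesProd (f ∘ stokesVar K) (2 * K + 2) = !![f (X (muVar K)), 0; 0, f (X (lamVar K))] := by
  have hdiag : (!![X (lamVar K), 0; 0, X (muVar K)] : Matrix (Fin 2) (Fin 2) (RK K)).map f
      = !![f (X (lamVar K)), 0; 0, f (X (muVar K))] := by
    ext a b; fin_cases a <;> fin_cases b <;> simp
  have hinv : !![f (X (lamVar K)), 0; 0, f (X (muVar K))]
      * !![f (X (muVar K)), 0; 0, f (X (lamVar K))] = 1 := by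
    ext a b; fin_cases a <;> fin_cases b <;> simp [Matrix.mul_apply, hlm, mul_comm]
  rw [FmatP_eq, Matrix.map_mul, map_stokesProd, hdiag] at hF
  rw [← one_mul !![f (X (muVar K)), 0; 0, f (X (lamVar K))], ← hF, mul_assoc, hinv, mul_one]

lemma map_X_lamVar_mul_Dlam (a b : Fin 2) :
    f (X (lamVar K) * Dlam K ((FmatP K - 1) a b)) = !![1, 0; 0, -1] a b := by
  have hdiag : (!![1, 0; 0, -X (muVar K) ^ 2] : Matrix (Fin 2) (Fin 2) (RK K)).map f
      = !![1, 0; 0, -f (X (muVar K)) ^ 2] := by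
    ext a b; fin_cases a <;> fin_cases b <;> simp
  calc f (X (lamVar K) * Dlam K ((FmatP K - 1) a b))
      = (f (X (lamVar K)) • ((FmatP K).map (lamDeriv K)).map f) a b := by
        simp [← lamDeriv_apply, Matrix.one_apply, apply_ite (lamDeriv K)]
    _ = !![1, 0; 0, -1] a b := by
        rw [map_lamDeriv_FmatP, Matrix.map_mul, map_stokesProd, hdiag,
          stokesProd_map_eq_diag f hF hlm]
        fin_cases a <;> fin_cases b <;> simp [hlm]
        linear_combination (f (X (lamVar K)) * f (X (muVar K)) + 1) * hlm

theorem map_fnBrP_X_sVar_eq_zero (m : Fin (2 * K + 2)) (a b : Fin 2) :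
    f (fnBrP K (X (sVar K m)) ((FmatP K - 1) a b)) = 0 := by
  have hcoeff : ∀ j l : Fin (2 * K + 2),
      f (cSSP K j l) = fnCoeff (f ∘ stokesVar K) K (f (X (muVar K))) j l := by
    intro j l
    rw [← map_fnCoeff]
    simp [cSSP, fnCoeff, stokesVar_coe]
  have hlast : f (cSLP K m * Dlam K ((FmatP K - 1) a b))
      = ((-1) ^ ((m : ℕ) + 1) * (f ∘ stokesVar K) m) * !![1, 0; 0, -1] a b := by
    have hsplit : cSLP K m * Dlam K ((FmatP K - 1) a b)
        = ((-1) ^ ((m : ℕ) + 1) * stokesVar K m)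
          * (X (lamVar K) * Dlam K ((FmatP K - 1) a b)) := by
      rw [cSLP, stokesVar_coe]
      ring
    rw [hsplit, map_mul, map_X_lamVar_mul_Dlam f hF hlm]
    simp
  rw [fnBrP_X_sVar, map_add, map_sub, map_sum, map_sum, hlast]
  simp only [apply_ite f, map_mul, map_zero, hcoeff, map_pderiv_FmatP_sub_one f hF]
  rw [sum_fin_ite_lt_eq_sum_Ioo _ m
      (fun l => fnCoeff _ K _ m l * stokesDlog (f ∘ stokesVar K) l a b),
    sum_fin_ite_gt_eq_sum_range m.isLt.le
      (fun j => fnCoeff _ K _ j m * stokesDlog (f ∘ stokesVar K) j a b)]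
  have hzero := congrFun (congrFun (fnBracketMatrix_eq_zero (stokesProd_map_eq_diag f hF hlm)
    hlm m.isLt) a) b
  simpa only [fnBracketMatrix, Matrix.add_apply, Matrix.sub_apply, Matrix.sum_apply,
    Matrix.smul_apply, smul_eq_mul, Matrix.zero_apply] using hzero

theorem map_fnBrP_X_lamVar_eq_zero (a b : Fin 2) :
    f (fnBrP K (X (lamVar K)) ((FmatP K - 1) a b)) = 0 := by
  rw [fnBrP_X_lamVar, map_neg, map_sum, neg_eq_zero]
  have hzero := congrFun (congrFun (sum_stokesDlog_eq_zero (stokesProd_map_eq_diag f hF hlm)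
    hlm) a) b
  simp only [Matrix.sum_apply, Matrix.smul_apply, smul_eq_mul, Matrix.zero_apply] at hzero
  have hterm : ∀ j : Fin (2 * K + 2), f (cSLP K j * pderiv (sVar K j) ((FmatP K - 1) a b))
      = -f (X (lamVar K))
        * ((-1) ^ (j : ℕ) * (f ∘ stokesVar K) j * stokesDlog (f ∘ stokesVar K) j a b) := by
    intro j
    rw [map_mul, map_pderiv_FmatP_sub_one f hF]
    simp [cSLP, stokesVar_coe]
    ring
  rw [Finset.sum_congr rfl fun j _ => hterm j, ← Finset.mul_sum,
    Fin.sum_univ_eq_sum_range (fun j => (-1) ^ j * (f ∘ stokesVar K) j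
      * stokesDlog (f ∘ stokesVar K) j a b), hzero, mul_zero]

end Specialization

end LaurentRing

end FlaschkaNewell

theorem fn_locus_poisson_subvariety_general (K : ℕ) (i : Fin (2*K+3)) (a b : Fin 2) :
    fnBrP K (X (coordVar K i)) ((FmatP K - 1) a b) ∈
      Ideal.span ({(FmatP K - 1) 0 0, (FmatP K - 1) 0 1,
                   (FmatP K - 1) 1 0, (FmatP K - 1) 1 1,
                   X (lamVar K) * X (muVar K) - 1} : Set (RK K)) := by
  set I := Ideal.span ({(FmatP K - 1) 0 0, (FmatP K - 1) 0 1, (FmatP K - 1) 1 0,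
    (FmatP K - 1) 1 1, X (lamVar K) * X (muVar K) - 1} : Set (RK K))
  have hF : (FmatP K).map (Ideal.Quotient.mk I) = 1 := by
    have hker : (Ideal.Quotient.mk I).mapMatrix (FmatP K - 1) = 0 := by
      ext a b : 2
      refine Ideal.Quotient.eq_zero_iff_mem.2 (Ideal.subset_span ?_)
      fin_cases a <;> fin_cases b <;> simp
    rwa [map_sub, map_one, sub_eq_zero] at hker
  have hlm : Ideal.Quotient.mk I (X (lamVar K)) * Ideal.Quotient.mk I (X (muVar K)) = 1 := by
    rw [← map_mul, ← map_one (Ideal.Quotient.mk I), Ideal.Quotient.eq]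
    exact Ideal.subset_span (by simp)
  rw [← Ideal.Quotient.eq_zero_iff_mem, coordVar]
  split_ifs
  · exact FlaschkaNewell.map_fnBrP_X_sVar_eq_zero _ hF hlm _ a b
  · exact FlaschkaNewell.map_fnBrP_X_lamVar_eq_zero _ hF hlm a b

/-- the locus `{F_K = 1}` is a Poisson subvariety: in the Laurent-polynomial
ring `ℂ[s, λ, λ⁻¹]` (encoded as `ℂ[s, λ, μ]` together with the relation `λμ − 1`),
for every coordinate `x` among `s_1, …, s_{2K+2}, λ` and every matrix entry `(a,b)`,
the bracket `{x, (F_K − 1)_{ab}}_{FN}` lies in the ideal generated by the four entries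
of `F_K − 1` (together with the encoding relation `λμ − 1`). -/
theorem fn_locus_poisson_subvariety (K : ℕ) (hK : 1 ≤ K) (i : Fin (2*K+3)) (a b : Fin 2) :
    fnBrP K (X (coordVar K i)) ((FmatP K - 1) a b) ∈
      Ideal.span ({(FmatP K - 1) 0 0, (FmatP K - 1) 0 1,
                   (FmatP K - 1) 1 0, (FmatP K - 1) 1 1,
                   X (lamVar K) * X (muVar K) - 1} : Set (RK K)) :=
  fn_locus_poisson_subvariety_general K i a b
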